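/- Let 𝒢 be the transition graph of a connected graph G rooted at s. A minimum complete set of efficient {s}-U-paths in 𝒢 with respect to arc costs γ corresponds (via preimage edges) to a minimum complete set of efficient spanning trees of G(U) with respect to c; in particular the sets of nondominated cost vectors γ(P_U)* and c(T_{G(U)})* coincide. -/

import Mathlib

/-- The cost vector of a set of edges: the componentwise sum of the edge cost vectors. -/
noncomputable def treeCost {V : Type*} [Fintype V] {d : ℕ}
    (c : Sym2 V → (Fin d → ℝ)) (E : Set (Sym2 V)) : Fin d → ℝ :=
  ∑ e ∈ E.toFinite.toFinset, c e

/-- `x` dominates `y` if `x ≤ y` componentwise and `x ≠ y`. -/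
def Dominates {d : ℕ} (x y : Fin d → ℝ) : Prop := x ≤ y ∧ x ≠ y

/-- `t` is a spanning tree of the induced subgraph `G(U)`:
a subgraph of `G` with vertex set `U` that is connected and acyclic. -/
def IsSpanningTreeOf {V : Type*} (G : SimpleGraph V) (U : Set V)
    (t : G.Subgraph) : Prop :=
  t.verts = U ∧ t.coe.IsTree

/-- `t` is an efficient spanning tree of `G(U)`: no spanning tree of `G(U)` dominates it. -/
def IsEfficientSpanningTree {V : Type*} [Fintype V] {d : ℕ} (G : SimpleGraph V)
    (c : Sym2 V → (Fin d → ℝ)) (U : Set V) (t : G.Subgraph) : Prop :=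
  IsSpanningTreeOf G U t ∧
    ¬ ∃ t' : G.Subgraph, IsSpanningTreeOf G U t' ∧
      Dominates (treeCost c t'.edgeSet) (treeCost c t.edgeSet)

/-- The edge `e` lies in the cut `δ(U)`: it is an edge of `G` with exactly one endpoint in `U`. -/
def InCut {V : Type*} (G : SimpleGraph V) (U : Set V) (e : Sym2 V) : Prop :=
  e ∈ G.edgeSet ∧ ∃ u w : V, e = s(u, w) ∧ u ∈ U ∧ w ∉ U

/-- An arc of the transition graph out of node `U`, identified by an ordered
preimage edge `(u, w)` with `u ∈ U`, `w ∉ U`, `[u,w] ∈ E`. -/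
def TransStep {V : Type*} (G : SimpleGraph V) (U : Set V) (e : V × V) : Prop :=
  e.1 ∈ U ∧ e.2 ∉ U ∧ G.Adj e.1 e.2

/-- A path in the transition graph from node `U` to node `W`, recorded as the
list of (ordered) preimage edges of its arcs. -/
def TransWalk {V : Type*} (G : SimpleGraph V) : Set V → Set V → List (V × V) → Prop
  | U, W, [] => U = W
  | U, W, e :: p => TransStep G U e ∧ TransWalk G (insert e.2 U) W p

/-- The path `p` in the transition graph represents the tree `t`:
the preimage edges of the arcs of `p` are exactly the edges of `t`. -/
def Represents {V : Type*} (G : SimpleGraph V) (p : List (V × V)) (t : G.Subgraph) : Prop :=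
  t.edgeSet = {e | ∃ uw ∈ p, e = s(uw.1, uw.2)}

/-- The cost of a path in the transition graph: the sum of the costs of the
preimage edges of its arcs. -/
def walkCost {V : Type*} {d : ℕ} (c : Sym2 V → (Fin d → ℝ))
    (p : List (V × V)) : Fin d → ℝ :=
  (p.map fun uw => c s(uw.1, uw.2)).sum

/-- The set of nondominated vectors of `Y`. -/
def NDSet {d : ℕ} (Y : Set (Fin d → ℝ)) : Set (Fin d → ℝ) :=
  {y ∈ Y | ¬ ∃ y' ∈ Y, y' ≤ y ∧ y' ≠ y}


section Aux

open SimpleGraph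

variable {V : Type*} {G : SimpleGraph V}

/-- Lift a `G`-walk whose `toSubgraph` is contained in `H` to a walk in `H.coe`. -/
def STAux.liftW (H : G.Subgraph) : ∀ {x y : V} (p : G.Walk x y), p.toSubgraph ≤ H →
    (hx : x ∈ H.verts) → (hy : y ∈ H.verts) →
    {q : H.coe.Walk ⟨x, hx⟩ ⟨y, hy⟩ // q.map (Subgraph.hom H) = p}
  | _, _, SimpleGraph.Walk.nil, _, _, _ => ⟨SimpleGraph.Walk.nil, rfl⟩
  | x, y, @SimpleGraph.Walk.cons _ _ _ z _ h p, hp, hx, hy => by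
      rw [SimpleGraph.Walk.toSubgraph] at hp
      have h1 : G.subgraphOfAdj h ≤ H := le_trans le_sup_left hp
      have h2 : p.toSubgraph ≤ H := le_trans le_sup_right hp
      have hadj : H.Adj x z := h1.2 (by simp)
      have hz : z ∈ H.verts := H.edge_vert hadj.symm
      obtain ⟨q, hq⟩ := STAux.liftW H p h2 hz hy
      exact ⟨SimpleGraph.Walk.cons hadj.coe q, by simp [hq]⟩

lemma STAux.coe_acyclic_iff (H : G.Subgraph) :
    H.coe.IsAcyclic ↔ ∀ ⦃x : V⦄ (p : G.Walk x x), p.IsCycle → ¬ p.toSubgraph ≤ H := by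
  constructor
  · intro hA x p hc hle
    have hx : x ∈ H.verts := hle.1 p.start_mem_verts_toSubgraph
    obtain ⟨q, hq⟩ := STAux.liftW H p hle hx hx
    exact hA q ((SimpleGraph.Walk.map_isCycle_iff_of_injective
      Subgraph.hom_injective).mp (hq ▸ hc))
  · intro hA x q hq
    refine hA (q.map (Subgraph.hom H)) (hq.map Subgraph.hom_injective) ?_
    rw [SimpleGraph.Walk.toSubgraph_map]
    simpa using Subgraph.coeSubgraph_le _

lemma STAux.pendant_unique_nbr {t₀ : G.Subgraph} {a b z : V} (hb : b ∉ t₀.verts)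
    (hab : G.Adj a b) (h : (t₀ ⊔ G.subgraphOfAdj hab).Adj b z) : z = a := by
  rcases h with h | h
  · exact absurd (t₀.edge_vert h) hb
  · rw [subgraphOfAdj_adj, Sym2.eq_iff] at h
    rcases h with ⟨h1, h2⟩ | ⟨h1, h2⟩
    · exact absurd h1 hab.ne
    · exact h1.symm

lemma STAux.pendant_acyclic {t₀ : G.Subgraph} (hA : t₀.coe.IsAcyclic) {a b : V}
    (ha : a ∈ t₀.verts) (hb : b ∉ t₀.verts) (hab : G.Adj a b) :
    (t₀ ⊔ G.subgraphOfAdj hab).coe.IsAcyclic := by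
  classical
  rw [STAux.coe_acyclic_iff]
  intro x p hc hle
  by_cases hbp : b ∈ p.support
  · have hqc : (p.rotate b hbp).IsCycle := hc.rotate hbp
    have hqle : (p.rotate b hbp).toSubgraph ≤ t₀ ⊔ G.subgraphOfAdj hab := by
      rw [SimpleGraph.Walk.toSubgraph_rotate]; exact hle
    obtain ⟨w, h, r, hqr⟩ := SimpleGraph.Walk.not_nil_iff.mp hqc.not_nil
    rw [hqr] at hqle hqc
    rw [SimpleGraph.Walk.toSubgraph] at hqle
    have h1 : (t₀ ⊔ G.subgraphOfAdj hab).Adj b w := (le_trans le_sup_left hqle).2 (by simp)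
    have hw : w = a := STAux.pendant_unique_nbr hb hab h1
    have hrnil : ¬ r.reverse.Nil := SimpleGraph.Walk.not_nil_of_ne h.ne
    obtain ⟨w', h', r', hrr⟩ := SimpleGraph.Walk.not_nil_iff.mp hrnil
    have h2 : (t₀ ⊔ G.subgraphOfAdj hab).Adj b w' := by
      have h3 : r.reverse.toSubgraph ≤ t₀ ⊔ G.subgraphOfAdj hab := by
        rw [SimpleGraph.Walk.toSubgraph_reverse]
        exact le_trans le_sup_right hqle
      rw [hrr, SimpleGraph.Walk.toSubgraph] at h3
      exact (le_trans le_sup_left h3).2 (by simp)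
    have hw' : w' = w := (STAux.pendant_unique_nbr hb hab h2).trans hw.symm
    have hmem : s(b, w) ∈ r.edges := by
      have : s(b, w') ∈ r.reverse.edges := by rw [hrr]; simp
      rw [hw'] at this
      rwa [SimpleGraph.Walk.edges_reverse, List.mem_reverse] at this
    have hnodup := hqc.edges_nodup
    rw [SimpleGraph.Walk.edges_cons] at hnodup
    exact (List.nodup_cons.mp hnodup).1 hmem
  · have hle₀ : p.toSubgraph ≤ t₀ := by
      constructor
      · intro v hv
        rcases hle.1 hv with hv0 | hv0
        · exact hv0
        · rcases hv0 with rfl | rfl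
          · exact ha
          · exact absurd ((SimpleGraph.Walk.mem_verts_toSubgraph p).mp hv) hbp
      · intro u v huv
        rcases hle.2 huv with h1 | h1
        · exact h1
        · exfalso
          rw [subgraphOfAdj_adj, Sym2.eq_iff] at h1
          have hu : u ∈ p.support := (SimpleGraph.Walk.mem_verts_toSubgraph p).mp
            (p.toSubgraph.edge_vert huv)
          have hv : v ∈ p.support := (SimpleGraph.Walk.mem_verts_toSubgraph p).mp
            (p.toSubgraph.edge_vert huv.symm)
          rcases h1 with ⟨h1, h2⟩ | ⟨h1, h2⟩
          · exact hbp (by rw [← h2] at hv; exact hv)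
          · exact hbp (by rw [← h2] at hu; exact hu)
    exact (STAux.coe_acyclic_iff t₀).mp hA p hc hle₀

lemma STAux.treeCost_insert {V : Type*} [Fintype V] {d : ℕ}
    (c : Sym2 V → (Fin d → ℝ)) {E : Set (Sym2 V)} {e : Sym2 V} (he : e ∉ E) :
    treeCost c (insert e E) = c e + treeCost c E := by
  classical
  unfold treeCost
  rw [Set.Finite.toFinset_insert, Finset.sum_insert (by simpa using he)]

lemma STAux.pendant_tree {t₀ : G.Subgraph} {S : Set V} (h₀ : IsSpanningTreeOf G S t₀)
    {a b : V} (ha : a ∈ S) (hb : b ∉ S) (hab : G.Adj a b) :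
    IsSpanningTreeOf G (insert b S) (t₀ ⊔ G.subgraphOfAdj hab) ∧
      (t₀ ⊔ G.subgraphOfAdj hab).edgeSet = insert s(a, b) t₀.edgeSet := by
  obtain ⟨hv, htree⟩ := h₀
  refine ⟨⟨?_, ?_, ?_⟩, ?_⟩
  · rw [Subgraph.verts_sup, hv, subgraphOfAdj_verts]
    ext x; simp only [Set.mem_union, Set.mem_insert_iff, Set.mem_singleton_iff]
    constructor
    · rintro (h | h | h) <;> simp [h, ha]
    · rintro (h | h) <;> simp [h, ha]
  · exact ((Subgraph.connected_sup (Subgraph.Connected.preconnected ⟨htree.isConnected⟩) (Subgraph.subgraphOfAdj_connected hab).preconnected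
      ⟨a, by constructor <;> simp [hv, ha]⟩)).coe
  · exact STAux.pendant_acyclic htree.IsAcyclic (by rwa [hv]) (by rwa [hv]) hab
  · rw [Subgraph.edgeSet_sup, edgeSet_subgraphOfAdj, Set.union_singleton]

end Aux

section Aux2

open SimpleGraph

variable {V : Type*} {G : SimpleGraph V}

lemma STAux.singleton_tree (s : V) :
    IsSpanningTreeOf G {s} (G.singletonSubgraph s) := by
  refine ⟨singletonSubgraph_verts G s, ?_, ?_⟩
  · exact Subgraph.singletonSubgraph_connected.coe
  · rw [STAux.coe_acyclic_iff]
    intro x p hc hle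
    obtain ⟨w, h, r, hqr⟩ := SimpleGraph.Walk.not_nil_iff.mp hc.not_nil
    rw [hqr, SimpleGraph.Walk.toSubgraph] at hle
    have h1 : (G.singletonSubgraph s).Adj x w := (le_trans le_sup_left hle).2 (by simp)
    simp [singletonSubgraph_adj] at h1

lemma STAux.edge_not_mem {t₀ : G.Subgraph} {a b : V} (hb : b ∉ t₀.verts) :
    s(a, b) ∉ t₀.edgeSet := fun h => hb (t₀.edge_vert (Subgraph.mem_edgeSet.mp h).symm)

lemma STAux.walk_to_tree [Fintype V] {d : ℕ} (c : Sym2 V → (Fin d → ℝ)) {U : Set V} :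
    ∀ (p : List (V × V)) {S : Set V} (t₀ : G.Subgraph), TransWalk G S U p →
      IsSpanningTreeOf G S t₀ →
      ∃ t, IsSpanningTreeOf G U t ∧
        treeCost c t.edgeSet = treeCost c t₀.edgeSet + walkCost c p
  | [], S, t₀, hw, h₀ => by
      cases hw
      exact ⟨t₀, h₀, by simp [walkCost]⟩
  | e :: p, S, t₀, hw, h₀ => by
      obtain ⟨⟨h1, h2, h3⟩, hw'⟩ := hw
      obtain ⟨h₀', hE⟩ := STAux.pendant_tree h₀ h1 h2 h3
      obtain ⟨t, ht, hcost⟩ := STAux.walk_to_tree c p _ hw' h₀'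
      refine ⟨t, ht, ?_⟩
      rw [hcost, hE, STAux.treeCost_insert c (STAux.edge_not_mem (h₀.1 ▸ h2))]
      simp only [walkCost, List.map_cons, List.sum_cons]
      abel

lemma STAux.tree_ncard [Fintype V] {t : G.Subgraph} {U : Set V}
    (h : IsSpanningTreeOf G U t) : t.edgeSet.ncard + 1 = U.ncard := by
  classical
  haveI : Fintype ↥t.verts := Fintype.ofFinite _
  haveI : Fintype ↥(t.coe.edgeSet) := Fintype.ofFinite _
  have hcard := h.2.card_edgeFinset
  have h1 : t.coe.edgeFinset.card = t.coe.edgeSet.ncard := by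
    simp [Set.ncard_eq_toFinset_card', SimpleGraph.edgeFinset]
  have h2 : t.coe.edgeSet.ncard = t.edgeSet.ncard := by
    rw [← Subgraph.image_coe_edgeSet_coe,
      Set.ncard_image_of_injective _ (Sym2.map.injective Subtype.val_injective)]
  have h3 : Fintype.card ↥t.verts = t.verts.ncard := by
    rw [← Nat.card_coe_set_eq, Nat.card_eq_fintype_card]
  rw [h1, h2, h3, h.1] at hcard
  exact hcard

lemma STAux.sub_tree_eq [Fintype V] {t₁ t : G.Subgraph} {U : Set V}
    (hle : t₁ ≤ t) (h₁ : IsSpanningTreeOf G U t₁) (h : IsSpanningTreeOf G U t) :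
    t₁.edgeSet = t.edgeSet := by
  have hsub : t₁.edgeSet ⊆ t.edgeSet := Subgraph.edgeSet_mono hle
  have hc : t.edgeSet.ncard ≤ t₁.edgeSet.ncard := by
    have := STAux.tree_ncard h₁
    have := STAux.tree_ncard h
    omega
  exact Set.eq_of_subset_of_ncard_le hsub hc (Set.toFinite _)

lemma STAux.grow [Fintype V] {d : ℕ} (c : Sym2 V → (Fin d → ℝ)) {U : Set V}
    {t : G.Subgraph} (ht : IsSpanningTreeOf G U t) :
    ∀ (n : ℕ) {S : Set V} (t₀ : G.Subgraph), (U \ S).ncard = n → S ⊆ U → t₀ ≤ t →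
      IsSpanningTreeOf G S t₀ →
      ∃ (p : List (V × V)) (t₁ : G.Subgraph), TransWalk G S U p ∧ t₁ ≤ t ∧
        IsSpanningTreeOf G U t₁ ∧
        treeCost c t₁.edgeSet = treeCost c t₀.edgeSet + walkCost c p := by
  intro n
  induction n with
  | zero =>
      intro S t₀ hn hSU hle h₀
      have hUS : U = S := by
        have : U \ S = ∅ := (Set.ncard_eq_zero (Set.toFinite _)).mp hn
        exact le_antisymm (Set.diff_eq_empty.mp this) hSU
      exact ⟨[], t₀, hUS.symm, hle, hUS ▸ h₀, by simp [walkCost]⟩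
  | succ n ih =>
      intro S t₀ hn hSU hle h₀
      obtain ⟨w, hw⟩ := Set.nonempty_of_ncard_ne_zero (by omega : (U \ S).ncard ≠ 0)
      obtain ⟨s₀, hs₀⟩ := Subgraph.Connected.nonempty ⟨h₀.2.1⟩
      have hs₀S : s₀ ∈ S := by rw [← h₀.1]; exact hs₀
      have hs₀U : s₀ ∈ t.verts := by rw [ht.1]; exact hSU hs₀S
      have hwU : w ∈ t.verts := by rw [ht.1]; exact hw.1
      have conn : t.coe.Preconnected := ht.2.1.preconnected
      obtain ⟨pw⟩ := conn ⟨s₀, hs₀U⟩ ⟨w, hwU⟩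
      obtain ⟨dd, _, hdf', hds'⟩ := pw.exists_boundary_dart {v : ↥t.verts | ↑v ∈ S}
        (by exact hs₀S) (by exact hw.2)
      have hdf : (dd.fst : V) ∈ S := hdf'
      have hds : (dd.snd : V) ∉ S := hds'
      have tAdj : t.Adj ↑dd.fst ↑dd.snd := dd.adj
      have Gab : G.Adj ↑dd.fst ↑dd.snd := t.adj_sub tAdj
      have hbU : (dd.snd : V) ∈ U := by rw [← ht.1]; exact dd.snd.2
      obtain ⟨h₀', hE⟩ := STAux.pendant_tree h₀ hdf hds Gab
      have hle' : t₀ ⊔ G.subgraphOfAdj Gab ≤ t :=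
        sup_le hle (subgraphOfAdj_le_of_adj t tAdj)
      have hn' : (U \ insert (↑dd.snd) S).ncard = n := by
        have hset : U \ insert (↑dd.snd) S = (U \ S) \ {(↑dd.snd : V)} := by
          ext x
          simp only [Set.mem_diff, Set.mem_insert_iff, Set.mem_singleton_iff]
          tauto
        rw [hset, Set.ncard_diff_singleton_of_mem (by exact ⟨hbU, hds⟩), hn]
        omega
      obtain ⟨p, t₁, hp, hlet, ht₁, hcost⟩ :=
        ih _ hn' (Set.insert_subset hbU hSU) hle' h₀'
      refine ⟨(↑dd.fst, ↑dd.snd) :: p, t₁, ⟨⟨hdf, hds, Gab⟩, hp⟩, hlet, ht₁, ?_⟩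
      rw [hcost, hE, STAux.treeCost_insert c (STAux.edge_not_mem
        (show (dd.snd : V) ∉ t₀.verts by rw [h₀.1]; exact hds))]
      simp only [walkCost, List.map_cons, List.sum_cons]
      abel

end Aux2

/-- the nondominated cost vectors of `{s}`-`U`-paths in the transition graph
coincide with the nondominated cost vectors of spanning trees of `G(U)`. -/
theorem stmt_10 {V : Type*} [Fintype V] {d : ℕ} (G : SimpleGraph V)
    (hG : G.Connected) (c : Sym2 V → (Fin d → ℝ)) (hc : ∀ e, 0 ≤ c e)
    (s : V) (U : Set V) (hs : s ∈ U) :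
    NDSet {x | ∃ p : List (V × V), TransWalk G {s} U p ∧ walkCost c p = x} =
      NDSet {x | ∃ t : G.Subgraph, IsSpanningTreeOf G U t ∧
        treeCost c t.edgeSet = x} :=  by
  have hsets : {x | ∃ p : List (V × V), TransWalk G {s} U p ∧ walkCost c p = x} =
      {x | ∃ t : G.Subgraph, IsSpanningTreeOf G U t ∧ treeCost c t.edgeSet = x} := by
    ext x
    simp only [Set.mem_setOf_eq]
    constructor
    · rintro ⟨p, hw, rfl⟩
      obtain ⟨t, ht, hcost⟩ := STAux.walk_to_tree c p (G.singletonSubgraph s) hw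
        (STAux.singleton_tree s)
      refine ⟨t, ht, ?_⟩
      rw [hcost, SimpleGraph.edgeSet_singletonSubgraph]
      have h0 : treeCost c (∅ : Set (Sym2 V)) = 0 := by simp [treeCost]
      rw [h0, zero_add]
    · rintro ⟨t, ht, rfl⟩
      have hle : G.singletonSubgraph s ≤ t :=
        (SimpleGraph.singletonSubgraph_le_iff s t).mpr (by rw [ht.1]; exact hs)
      obtain ⟨p, t₁, hp, hlet, ht₁, hcost⟩ := STAux.grow c ht _ (G.singletonSubgraph s) rfl
        (Set.singleton_subset_iff.mpr hs) hle (STAux.singleton_tree s)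
      refine ⟨p, hp, ?_⟩
      have heq := STAux.sub_tree_eq hlet ht₁ ht
      rw [SimpleGraph.edgeSet_singletonSubgraph] at hcost
      have h0 : treeCost c (∅ : Set (Sym2 V)) = 0 := by simp [treeCost]
      rw [h0, zero_add] at hcost
      rw [← heq, hcost]
  rw [hsets]
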